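/- Let (V, w) be a weighted digraph, let w_max : ℝ satisfy w u v ≤ w_max for all u, v, and let d : ℕ satisfy d·w_max < 1. Suppose the underlying undirected graph of (V, w) (with u adjacent to v iff u ≠ v and w u v > 0 or w v u > 0) has maximum degree at most Δ, i.e. for every vertex v the set {u | u ≠ v and (w u v > 0 or w v u > 0)} has at most Δ elements. Then (V, w) admits a valid weighted improper coloring with ⌈Δ/(d+1)⌉ + 1 colors; in particular the weighted improper chromatic number of (V, w) is at most ⌈Δ/(d+1)⌉ + 1. -/

import Mathlib

open Finset

/-- A `k`-coloring `c` of a weighted digraph `(V, w)` is a valid weighted improper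
coloring if every vertex has weighted indegree less than `1` from same-colored vertices. -/
def ValidWIC {V : Type*} [Fintype V] [DecidableEq V] {k : ℕ} (w : V → V → ℝ)
    (c : V → Fin k) : Prop :=
  ∀ v : V, ∑ u ∈ Finset.univ.filter (fun u => u ≠ v ∧ c u = c v), w u v < 1

/-
Lovász's argument: among all colorings of the underlying undirected graph with
`k = ⌈Δ/(d+1)⌉ + 1` colors, take one with the fewest monochromatic edges. If a vertex `v` had more
than `d` neighbors of its own color, then, since `v` has at most `Δ < k (d+1)` neighbors, some color
occurs at most `d` times among them, and recoloring `v` with it would strictly decrease the number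
of monochromatic edges. So every vertex has at most `d` same-colored neighbors, and hence
same-colored in-weight at most `d · w_max < 1`; non-arcs contribute weight `≤ 0`.
-/

theorem Finset.sum_sum_eq_sum_sum_erase_add {V M : Type*} [Fintype V] [DecidableEq V]
    [AddCommMonoid M] (f : V → V → M) (v : V) (hv : f v v = 0) :
    ∑ u, ∑ x, f u x =
      ∑ u ∈ univ.erase v, ∑ x ∈ univ.erase v, f u x + ∑ x, f v x + ∑ u, f u v := by
  calc ∑ u, ∑ x, f u x = ∑ u, (∑ x ∈ univ.erase v, f u x + f u v) := by
        simp_rw [sum_erase_add _ _ (mem_univ v)]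
    _ = ∑ u ∈ univ.erase v, ∑ x ∈ univ.erase v, f u x + ∑ x ∈ univ.erase v, f v x
          + ∑ u, f u v := by
        rw [sum_add_distrib, ← sum_erase_add _ _ (mem_univ v)]
    _ = _ := by rw [sum_erase _ hv]

theorem Finset.sum_lt_one_of_card_le {ι : Type*} {s : Finset ι} {f : ι → ℝ} {b : ℝ}
    {d : ℕ} (hf : ∀ i ∈ s, f i ≤ b) (hs : #s ≤ d) (hd : d * b < 1) : ∑ i ∈ s, f i < 1 := by
  have hs' : (#s : ℝ) ≤ d := by exact_mod_cast hs
  calc ∑ i ∈ s, f i ≤ #s * b := by simpa using sum_le_card_nsmul s f b hf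
    _ < 1 := by
      rcases le_total 0 b with hb | hb
      · nlinarith
      · nlinarith [Nat.cast_nonneg (α := ℝ) #s]

namespace SimpleGraph

theorem neighborFinset_fromRel {V : Type*} [Fintype V] [DecidableEq V] {r : V → V → Prop}
    [DecidableRel r] [DecidableRel (fromRel r).Adj] (v : V) :
    (fromRel r).neighborFinset v = ({u | u ≠ v ∧ (r u v ∨ r v u)} : Finset V) := by
  ext u
  simp [ne_comm, or_comm]

variable {V α : Type*} [Fintype V] (G : SimpleGraph V) [DecidableRel G.Adj] [DecidableEq α]

def colorDegree (c : V → α) (v : V) (a : α) : ℕ := #{u ∈ G.neighborFinset v | c u = a}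

/-- Twice the number of monochromatic edges of `c`. -/
def monochromaticDegreeSum (c : V → α) : ℕ := ∑ v, G.colorDegree c v (c v)

theorem colorDegree_eq_sum (c : V → α) (v : V) (a : α) :
    G.colorDegree c v a = ∑ u, if G.Adj v u ∧ c u = a then 1 else 0 := by
  rw [colorDegree, neighborFinset_eq_filter, filter_filter, card_filter]

variable [DecidableEq V]

theorem monochromaticDegreeSum_eq (c : V → α) (v : V) :
    G.monochromaticDegreeSum c =
      ∑ u ∈ univ.erase v, ∑ x ∈ univ.erase v, (if G.Adj u x ∧ c x = c u then 1 else 0)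
        + 2 * G.colorDegree c v (c v) := by
  have hsymm : ∑ u, (if G.Adj u v ∧ c v = c u then 1 else 0) = G.colorDegree c v (c v) := by
    simp only [colorDegree_eq_sum, G.adj_comm, eq_comm]
  rw [monochromaticDegreeSum, Fintype.sum_congr _ _ fun u => G.colorDegree_eq_sum c u (c u),
    sum_sum_eq_sum_sum_erase_add _ v (by simp), hsymm, ← colorDegree_eq_sum]
  ring

theorem monochromaticDegreeSum_update (c : V → α) (v : V) (a : α) :
    G.monochromaticDegreeSum (Function.update c v a) + 2 * G.colorDegree c v (c v) =
      G.monochromaticDegreeSum c + 2 * G.colorDegree c v a := by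
  have hoff : ∀ u ∈ univ.erase v, ∀ x ∈ univ.erase v,
      (if G.Adj u x ∧ Function.update c v a x = Function.update c v a u then 1 else 0) =
        if G.Adj u x ∧ c x = c u then 1 else 0 := fun u hu x hx => by
    rw [Function.update_of_ne (ne_of_mem_erase hu), Function.update_of_ne (ne_of_mem_erase hx)]
  have hv : G.colorDegree (Function.update c v a) v (Function.update c v a v) =
      G.colorDegree c v a := by
    rw [Function.update_self, colorDegree, colorDegree]
    refine congrArg card (filter_congr fun u hu => ?_)
    rw [Function.update_of_ne ((G.mem_neighborFinset v u).mp hu).ne']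
  rw [G.monochromaticDegreeSum_eq _ v, G.monochromaticDegreeSum_eq c v, hv,
    sum_congr rfl fun u hu => sum_congr rfl (hoff u hu)]
  ring

theorem exists_coloring_colorDegree_le [Fintype α] [Nonempty α] {d : ℕ}
    (h : ∀ v, G.degree v < Fintype.card α * (d + 1)) :
    ∃ c : V → α, ∀ v, G.colorDegree c v (c v) ≤ d := by
  obtain ⟨c, -, hmin⟩ :=
    exists_min_image (univ : Finset (V → α)) G.monochromaticDegreeSum univ_nonempty
  refine ⟨c, fun v => ?_⟩
  by_contra! hv
  obtain ⟨a, -, ha⟩ := exists_card_fiber_lt_of_card_lt_mul (s := G.neighborFinset v)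
    (t := univ) (f := c) (by simpa using h v)
  have hupdate := G.monochromaticDegreeSum_update c v a
  have hle := hmin (Function.update c v a) (mem_univ _)
  simp only [colorDegree] at hupdate hv
  omega

end SimpleGraph

theorem sum_weight_same_color_le_sum_neighbor {V α : Type*} [Fintype V] [DecidableEq V]
    [DecidableEq α] (w : V → V → ℝ)
    [DecidableRel (SimpleGraph.fromRel fun u v => 0 < w u v).Adj]
    (c : V → α) (v : V) :
    ∑ u ∈ {u | u ≠ v ∧ c u = c v}, w u v ≤
      ∑ u ∈ {u ∈ (SimpleGraph.fromRel fun u v => 0 < w u v).neighborFinset v | c u = c v},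
        w u v := by
  refine sum_le_sum_of_subset_of_nonpos' (fun u hu => ?_) fun u hu hnot => ?_
  · simp only [SimpleGraph.neighborFinset_fromRel, mem_filter, mem_univ, true_and] at hu ⊢
    exact ⟨hu.1.1, hu.2⟩
  · simp only [SimpleGraph.neighborFinset_fromRel, mem_filter, mem_univ, true_and] at hu hnot
    exact not_lt.mp fun hpos => hnot ⟨⟨hu.1, .inl hpos⟩, hu.2⟩

theorem weighted_improper_coloring_of_max_degree_general {V : Type*} [Fintype V] [DecidableEq V]
    (w : V → V → ℝ)
    (wmax : ℝ) (hmax : ∀ u v, w u v ≤ wmax)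
    (d : ℕ) (hd : (d : ℝ) * wmax < 1)
    (Δ : ℕ)
    (hdeg : ∀ v : V,
      (Finset.univ.filter (fun u => u ≠ v ∧ (0 < w u v ∨ 0 < w v u))).card ≤ Δ) :
    ∃ c : V → Fin ((Δ + d) / (d + 1) + 1), ValidWIC w c := by
  classical
  have hk : Δ < ((Δ + d) / (d + 1) + 1) * (d + 1) := by
    have := Nat.lt_div_mul_add (a := Δ + d) (by omega : 0 < d + 1)
    rw [add_mul]
    omega
  obtain ⟨c, hc⟩ := (SimpleGraph.fromRel fun u v => 0 < w u v).exists_coloring_colorDegree_le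
    (α := Fin ((Δ + d) / (d + 1) + 1)) (d := d) fun v => by
      rw [Fintype.card_fin, SimpleGraph.degree, SimpleGraph.neighborFinset_fromRel]
      convert (hdeg v).trans_lt hk
  exact ⟨c, fun v => (sum_weight_same_color_le_sum_neighbor w c v).trans_lt
    (sum_lt_one_of_card_le (fun u _ => hmax u v) (hc v) hd)⟩

theorem weighted_improper_coloring_of_max_degree {V : Type*} [Fintype V] [DecidableEq V]
    (w : V → V → ℝ)
    (hw0 : ∀ u v, 0 ≤ w u v) (hwd : ∀ v, w v v = 0)
    (wmax : ℝ) (hmax : ∀ u v, w u v ≤ wmax)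
    (d : ℕ) (hd : (d : ℝ) * wmax < 1)
    (Δ : ℕ)
    (hdeg : ∀ v : V,
      (Finset.univ.filter (fun u => u ≠ v ∧ (0 < w u v ∨ 0 < w v u))).card ≤ Δ) :
    ∃ c : V → Fin ((Δ + d) / (d + 1) + 1), ValidWIC w c :=
  weighted_improper_coloring_of_max_degree_general w wmax hmax d hd Δ hdeg
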